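/- arXiv:1610.00111 — 3 statements merged into one kernel-verified Lean document; each statement's English description precedes it below -/
import Mathlib

section
/- Let H be a complex Hilbert space, (𝓛_λ)_{λ∈Λ} a net of subspace lattices on H and 𝓛 a subspace lattice on H. If every weak-operator-topology limit of a norm-bounded subnet (L_μ)_{μ∈Λ₀} with L_μ ∈ 𝓛_μ belongs to the weak-operator-topology closed convex hull Conv 𝓛 of 𝓛, then for every ξ ∈ H ⊕ H one has d(ξ, E_𝓛) ≤ liminf_{λ∈Λ} d(ξ, E_{𝓛_λ}). -/
open Filter

noncomputable section

variable {H : Type*} [NormedAddCommGroup H] [InnerProductSpace ℂ H] [CompleteSpace H]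

/-- An orthogonal projection: a self-adjoint idempotent bounded operator. -/
def IsOrthoProj (L : H →L[ℂ] H) : Prop := IsSelfAdjoint L ∧ L * L = L

/-- The weak operator topology on `B(H)`. -/
def WOT (H : Type*) [NormedAddCommGroup H] [InnerProductSpace ℂ H] :
    TopologicalSpace (H →L[ℂ] H) :=
  TopologicalSpace.induced
    (fun T : H →L[ℂ] H => fun p : H × H => (inner ℂ (T p.1) p.2 : ℂ)) inferInstance

/-- The strong operator topology on `B(H)`. -/
def SOT (H : Type*) [NormedAddCommGroup H] [InnerProductSpace ℂ H] :
    TopologicalSpace (H →L[ℂ] H) :=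
  TopologicalSpace.induced (fun T : H →L[ℂ] H => (T : H → H)) inferInstance

/-- A subspace lattice: an SOT-closed sublattice of the lattice of
orthogonal projections (lattice operations described through ranges). -/
structure IsSubspaceLattice (𝓛 : Set (H →L[ℂ] H)) : Prop where
  nonempty : 𝓛.Nonempty
  proj : ∀ L ∈ 𝓛, IsOrthoProj L
  inf_mem : ∀ P ∈ 𝓛, ∀ Q ∈ 𝓛, ∃ R ∈ 𝓛,
    LinearMap.range (R : H →ₗ[ℂ] H) = LinearMap.range (P : H →ₗ[ℂ] H) ⊓ LinearMap.range (Q : H →ₗ[ℂ] H)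
  sup_mem : ∀ P ∈ 𝓛, ∀ Q ∈ 𝓛, ∃ R ∈ 𝓛,
    LinearMap.range (R : H →ₗ[ℂ] H) = (LinearMap.range (P : H →ₗ[ℂ] H) ⊔ LinearMap.range (Q : H →ₗ[ℂ] H)).topologicalClosure
  sotClosed : @IsClosed _ (SOT H) 𝓛

/-- The set `E_𝓛 ⊆ H ⊕ H` (where `H ⊕ H` is the Hilbert space direct sum,
realized as `WithLp 2 (H × H)`). -/
def Esec (𝓛 : Set (H →L[ℂ] H)) : Set (WithLp 2 (H × H)) :=
  {p | ∃ L ∈ 𝓛, L (WithLp.equiv 2 (H × H) p).1 = (WithLp.equiv 2 (H × H) p).1 ∧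
      L (WithLp.equiv 2 (H × H) p).2 = 0}

/-- WOT limsup of a net of sets of operators: all WOT-limits of norm-bounded
subnets (subnets are encoded by nontrivial filters finer than `atTop`). -/
def wotLimsup {Λ : Type*} [Preorder Λ] (F : Λ → Set (H →L[ℂ] H)) :
    Set (H →L[ℂ] H) :=
  {A | ∃ (T : Λ → H →L[ℂ] H) (f : Filter Λ), f.NeBot ∧ f ≤ atTop ∧
      (∀ᶠ l in f, T l ∈ F l) ∧ (∃ C : ℝ, ∀ᶠ l in f, ‖T l‖ ≤ C) ∧
      Tendsto T f (@nhds _ (WOT H) A)}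

/-!
For an orthogonal projection `L`, the set `{(x, y) | L x = x, L y = 0}` lies at squared distance
`‖ξ₁ - L ξ₁‖² + ‖L ξ₂‖² = ‖ξ₁‖² - re ⟪L ξ₁, ξ₁⟫ + re ⟪L ξ₂, ξ₂⟫` from `ξ`, so `d(ξ, E_𝓛)²` is the
infimum over `L ∈ 𝓛` of this expression. The expression is affine and WOT-continuous in `L`, so the
lower bound `d(ξ, E_𝓛)²` persists on `Conv 𝓛`. Given `r` above the liminf, choose along a subnet
`L_λ ∈ 𝓛_λ` at which the expression is `< r²`; by WOT-compactness of the unit ball a further subnet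
converges to some `A`, which lies in `Conv 𝓛` by hypothesis, so `d(ξ, E_𝓛)² ≤ r²`.
-/

open Topology
open scoped InnerProductSpace ComplexConjugate

theorem WithLp.prod_dist_sq_eq_of_L2 {α β : Type*} [SeminormedAddCommGroup α]
    [SeminormedAddCommGroup β] (x y : WithLp 2 (α × β)) :
    dist x y ^ 2 = dist x.fst y.fst ^ 2 + dist x.snd y.snd ^ 2 := by
  rw [WithLp.prod_dist_eq_of_L2, Real.sq_sqrt (by positivity)]

section WOTCompact

variable {E : Type*} [NormedAddCommGroup E] [InnerProductSpace ℂ E]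

def wotCoeffs (T : E →L[ℂ] E) : E × E → ℂ := fun p => ⟪T p.1, p.2⟫_ℂ

theorem wotCoeffs_injective : Function.Injective (wotCoeffs (E := E)) :=
  fun _ _ h => ContinuousLinearMap.ext fun x => ext_inner_right ℂ fun y => congrFun h (x, y)

theorem isEmbedding_wotCoeffs : @Topology.IsEmbedding _ _ (WOT E) _ (wotCoeffs (E := E)) :=
  @Topology.IsEmbedding.mk _ _ (WOT E) _ _ (@Topology.IsInducing.mk _ _ (WOT E) _ _ rfl)
    wotCoeffs_injective

variable (E) in
def unitSesqForms : Set (E × E → ℂ) :=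
  {f | (∀ x y z, f (x + y, z) = f (x, z) + f (y, z)) ∧
    (∀ (a : ℂ) x y, f (a • x, y) = conj a * f (x, y)) ∧
    (∀ x y z, f (x, y + z) = f (x, y) + f (x, z)) ∧
    (∀ (a : ℂ) x y, f (x, a • y) = a * f (x, y)) ∧
    ∀ x y, ‖f (x, y)‖ ≤ ‖x‖ * ‖y‖}

theorem isClosed_unitSesqForms : IsClosed (unitSesqForms E) := by
  simp only [unitSesqForms, Set.ofPred_and, Set.ofPred_forall]
  refine .inter ?_ (.inter ?_ (.inter ?_ (.inter ?_ ?_))) <;>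
    refine isClosed_iInter fun _ => isClosed_iInter fun _ => ?_
  all_goals first
    | exact isClosed_le (continuous_apply _).norm continuous_const
    | exact isClosed_iInter fun _ => isClosed_eq (by fun_prop) (by fun_prop)

theorem wotCoeffs_mem_unitSesqForms {T : E →L[ℂ] E} (hT : ‖T‖ ≤ 1) :
    wotCoeffs T ∈ unitSesqForms E := by
  refine ⟨fun x y z => ?_, fun a x y => ?_, fun x y z => ?_, fun a x y => ?_, fun x y => ?_⟩
  · simp [wotCoeffs]
  · simp [wotCoeffs, mul_comm]
  · simp [wotCoeffs]
  · simp [wotCoeffs]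
  · calc ‖⟪T x, y⟫_ℂ‖ ≤ ‖T x‖ * ‖y‖ := norm_inner_le_norm _ _
      _ ≤ ‖x‖ * ‖y‖ := by gcongr; simpa using T.le_of_opNorm_le hT x

theorem exists_wotCoeffs_eq [CompleteSpace E] {f : E × E → ℂ} (hf : f ∈ unitSesqForms E) :
    ∃ T : E →L[ℂ] E, ‖T‖ ≤ 1 ∧ wotCoeffs T = f := by
  obtain ⟨hadd₁, hsmul₁, hadd₂, hsmul₂, hbound⟩ := hf
  let B : E →L⋆[ℂ] E →L[ℂ] ℂ := LinearMap.mkContinuous₂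
    (LinearMap.mk₂'ₛₗ (starRingEnd ℂ) (RingHom.id ℂ) (fun x y => f (x, y))
      hadd₁ hsmul₁ hadd₂ hsmul₂) 1 fun x y => by simpa using hbound x y
  refine ⟨InnerProductSpace.continuousLinearMapOfBilin B, ?_, ?_⟩
  · refine ContinuousLinearMap.opNorm_le_bound _ zero_le_one fun x => ?_
    simpa [InnerProductSpace.continuousLinearMapOfBilin] using
      B.le_of_opNorm_le (LinearMap.mkContinuous₂_norm_le _ zero_le_one _) x
  · funext p
    exact InnerProductSpace.continuousLinearMapOfBilin_apply B p.1 p.2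

theorem isCompact_wot_setOf_norm_le_one [CompleteSpace E] :
    @IsCompact _ (WOT E) {T : E →L[ℂ] E | ‖T‖ ≤ 1} := by
  have himage : wotCoeffs '' {T : E →L[ℂ] E | ‖T‖ ≤ 1} = unitSesqForms E :=
    subset_antisymm (Set.image_subset_iff.2 fun _ => wotCoeffs_mem_unitSesqForms)
      fun f hf => exists_wotCoeffs_eq hf
  rw [@Topology.IsEmbedding.isCompact_iff _ _ (WOT E) _ _ _ isEmbedding_wotCoeffs, himage]
  refine (isCompact_univ_pi fun p : E × E => isCompact_closedBall 0 (‖p.1‖ * ‖p.2‖))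
    |>.of_isClosed_subset isClosed_unitSesqForms fun f hf p _ => ?_
  simpa using hf.2.2.2.2 p.1 p.2

end WOTCompact

namespace IsOrthoProj

variable {L : H →L[ℂ] H}

theorem isStarProjection (hL : IsOrthoProj L) : IsStarProjection L := ⟨hL.2, hL.1⟩

theorem norm_apply_le (hL : IsOrthoProj L) (v : H) : ‖L v‖ ≤ ‖v‖ :=
  (L.le_of_opNorm_le hL.isStarProjection.norm_le v).trans_eq (one_mul _)

theorem norm_sub_apply_le (hL : IsOrthoProj L) (v : H) : ‖v - L v‖ ≤ ‖v‖ :=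
  ((1 - L).le_of_opNorm_le hL.isStarProjection.one_sub.norm_le v).trans_eq (one_mul _)

theorem apply_apply (hL : IsOrthoProj L) (v : H) : L (L v) = L v :=
  DFunLike.congr_fun hL.2 v

theorem norm_apply_sq (hL : IsOrthoProj L) (v : H) : ‖L v‖ ^ 2 = L.reApplyInnerSelf v := by
  have h := ContinuousLinearMap.adjoint_inner_right L (L v) v
  rw [ContinuousLinearMap.isSelfAdjoint_iff'.mp hL.1, hL.apply_apply] at h
  rw [L.reApplyInnerSelf_apply, ← h, inner_self_eq_norm_sq (𝕜 := ℂ)]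

end IsOrthoProj

section DistSq

variable {E : Type*} [NormedAddCommGroup E] [InnerProductSpace ℂ E]

def distSqFunctional (ξ : WithLp 2 (E × E)) (T : E →L[ℂ] E) : ℝ :=
  ‖ξ.fst‖ ^ 2 - T.reApplyInnerSelf ξ.fst + T.reApplyInnerSelf ξ.snd

theorem continuous_distSqFunctional (ξ : WithLp 2 (E × E)) :
    Continuous[WOT E, _] (distSqFunctional ξ) :=
  have hcoeff : Continuous fun f : E × E → ℂ =>
      ‖ξ.fst‖ ^ 2 - RCLike.re (f (ξ.fst, ξ.fst)) + RCLike.re (f (ξ.snd, ξ.snd)) := by fun_prop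
  @Continuous.comp _ _ _ (WOT E) _ _ _ _ hcoeff continuous_induced_dom

theorem reApplyInnerSelf_smul_add_smul (S T : E →L[ℂ] E) (a b : ℝ) (v : E) :
    (a • S + b • T).reApplyInnerSelf v = a * S.reApplyInnerSelf v + b * T.reApplyInnerSelf v := by
  simp [ContinuousLinearMap.reApplyInnerSelf_apply, inner_add_left, ← Complex.coe_smul,
    inner_smul_left]

theorem convex_setOf_le_distSqFunctional (ξ : WithLp 2 (E × E)) (c : ℝ) :
    Convex ℝ {T | c ≤ distSqFunctional ξ T} := by
  intro S (hS : c ≤ distSqFunctional ξ S) T (hT : c ≤ distSqFunctional ξ T) a b ha hb hab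
  show c ≤ distSqFunctional ξ (a • S + b • T)
  rw [distSqFunctional, reApplyInnerSelf_smul_add_smul, reApplyInnerSelf_smul_add_smul]
  rw [distSqFunctional] at hS hT
  obtain rfl : b = 1 - a := by linarith
  nlinarith [mul_le_mul_of_nonneg_left hS ha, mul_le_mul_of_nonneg_left hT hb]

theorem le_distSqFunctional_of_mem_closure_convexHull {ξ : WithLp 2 (E × E)}
    {S : Set (E →L[ℂ] E)} {c : ℝ} (hS : ∀ T ∈ S, c ≤ distSqFunctional ξ T) {A : E →L[ℂ] E}
    (hA : A ∈ closure[WOT E] (convexHull ℝ S)) : c ≤ distSqFunctional ξ A :=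
  @closure_minimal _ (WOT E) _ _ (convexHull_min hS (convex_setOf_le_distSqFunctional ξ c))
    (@IsClosed.preimage _ _ (WOT E) _ _ (continuous_distSqFunctional ξ) _ isClosed_Ici) _ hA

end DistSq

theorem zero_mem_Esec {E : Type*} [NormedAddCommGroup E] [InnerProductSpace ℂ E]
    {𝓛 : Set (E →L[ℂ] E)} (h𝓛 : 𝓛.Nonempty) : 0 ∈ Esec 𝓛 :=
  let ⟨L, hL⟩ := h𝓛
  ⟨L, hL, map_zero L, map_zero L⟩

section Esec

variable {𝓛 : Set (H →L[ℂ] H)} {L : H →L[ℂ] H}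

theorem distSqFunctional_eq_of_isOrthoProj (hL : IsOrthoProj L) (ξ : WithLp 2 (H × H)) :
    distSqFunctional ξ L = ‖ξ.fst - L ξ.fst‖ ^ 2 + ‖L ξ.snd‖ ^ 2 := by
  rw [distSqFunctional, norm_sub_sq (𝕜 := ℂ), inner_re_symm, ← L.reApplyInnerSelf_apply,
    ← hL.norm_apply_sq, ← hL.norm_apply_sq]
  ring

theorem infDist_sq_le_distSqFunctional (hL𝓛 : L ∈ 𝓛) (hL : IsOrthoProj L)
    (ξ : WithLp 2 (H × H)) : Metric.infDist ξ (Esec 𝓛) ^ 2 ≤ distSqFunctional ξ L := by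
  let q : WithLp 2 (H × H) := WithLp.toLp 2 (L ξ.fst, ξ.snd - L ξ.snd)
  have hq : q ∈ Esec 𝓛 :=
    ⟨L, hL𝓛, hL.apply_apply ξ.fst, by simp [q, hL.apply_apply]⟩
  calc Metric.infDist ξ (Esec 𝓛) ^ 2 ≤ dist ξ q ^ 2 := by
        gcongr
        · exact Metric.infDist_nonneg
        · exact Metric.infDist_le_dist_of_mem hq
    _ = distSqFunctional ξ L := by
        rw [WithLp.prod_dist_sq_eq_of_L2, distSqFunctional_eq_of_isOrthoProj hL, dist_eq_norm,
          dist_eq_norm]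
        simp [q]

theorem exists_distSqFunctional_le_dist_sq (h𝓛 : ∀ L ∈ 𝓛, IsOrthoProj L)
    {p : WithLp 2 (H × H)} (hp : p ∈ Esec 𝓛) (ξ : WithLp 2 (H × H)) :
    ∃ L ∈ 𝓛, distSqFunctional ξ L ≤ dist ξ p ^ 2 := by
  obtain ⟨L, hL𝓛, hfst, hsnd⟩ := hp
  have hL := h𝓛 L hL𝓛
  refine ⟨L, hL𝓛, ?_⟩
  have h₁ : ξ.fst - L ξ.fst = (ξ.fst - p.fst) - L (ξ.fst - p.fst) := by
    rw [map_sub, show L p.fst = p.fst from hfst]; abel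
  have h₂ : L ξ.snd = L (ξ.snd - p.snd) := by
    rw [map_sub, show L p.snd = 0 from hsnd, sub_zero]
  rw [distSqFunctional_eq_of_isOrthoProj hL, WithLp.prod_dist_sq_eq_of_L2, dist_eq_norm,
    dist_eq_norm, h₁, h₂]
  gcongr
  exacts [hL.norm_sub_apply_le _, hL.norm_apply_le _]

theorem exists_distSqFunctional_lt_sq (h𝓛 : ∀ L ∈ 𝓛, IsOrthoProj L)
    (hne : 𝓛.Nonempty) {ξ : WithLp 2 (H × H)} {r : ℝ} (hr : Metric.infDist ξ (Esec 𝓛) < r) :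
    ∃ L ∈ 𝓛, distSqFunctional ξ L < r ^ 2 := by
  obtain ⟨p, hp, hpr⟩ := (Metric.infDist_lt_iff ⟨0, zero_mem_Esec hne⟩).1 hr
  obtain ⟨L, hL𝓛, hL⟩ := exists_distSqFunctional_le_dist_sq h𝓛 hp ξ
  exact ⟨L, hL𝓛, hL.trans_lt (by gcongr)⟩

theorem infDist_sq_le_of_mem_closure_convexHull (h𝓛 : ∀ L ∈ 𝓛, IsOrthoProj L)
    {A : H →L[ℂ] H} (hA : A ∈ closure[WOT H] (convexHull ℝ 𝓛))
    (ξ : WithLp 2 (H × H)) : Metric.infDist ξ (Esec 𝓛) ^ 2 ≤ distSqFunctional ξ A :=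
  le_distSqFunctional_of_mem_closure_convexHull
    (fun L hL => infDist_sq_le_distSqFunctional hL (h𝓛 L hL) ξ) hA

end Esec

theorem exists_tendsto_wot_of_norm_le_one {Λ : Type*} {f : Filter Λ} (hf : f.NeBot)
    {T : Λ → H →L[ℂ] H} (hT : ∀ l, ‖T l‖ ≤ 1) :
    ∃ A, ∃ g ≤ f, g.NeBot ∧ Tendsto T g (@nhds _ (WOT H) A) := by
  obtain ⟨A, -, hA⟩ := @IsCompact.ultrafilter_le_nhds _ (WOT H) _ isCompact_wot_setOf_norm_le_one
    ((Ultrafilter.of f).map T) (le_principal_iff.2 (Ultrafilter.mem_map.2 (univ_mem' hT)))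
  exact ⟨A, Ultrafilter.of f, Ultrafilter.of_le f, inferInstance, hA⟩

theorem infDist_le_of_frequently_infDist_lt {Λ : Type*} [Preorder Λ]
    {𝓛l : Λ → Set (H →L[ℂ] H)} {𝓛 : Set (H →L[ℂ] H)} (h𝓛l : ∀ l, ∀ L ∈ 𝓛l l, IsOrthoProj L)
    (hne : ∀ l, (𝓛l l).Nonempty) (h𝓛 : ∀ L ∈ 𝓛, IsOrthoProj L)
    (hlim : wotLimsup 𝓛l ⊆ closure[WOT H] (convexHull ℝ 𝓛)) {ξ : WithLp 2 (H × H)} {r : ℝ}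
    (hr : ∃ᶠ l in atTop, Metric.infDist ξ (Esec (𝓛l l)) < r) :
    Metric.infDist ξ (Esec 𝓛) ≤ r := by
  have hr₀ : 0 ≤ r := let ⟨_, hl⟩ := hr.exists; Metric.infDist_nonneg.trans hl.le
  have hchoice : ∀ l, ∃ L ∈ 𝓛l l,
      Metric.infDist ξ (Esec (𝓛l l)) < r → distSqFunctional ξ L < r ^ 2 := by
    intro l
    by_cases hl : Metric.infDist ξ (Esec (𝓛l l)) < r
    · obtain ⟨L, hL, hLr⟩ := exists_distSqFunctional_lt_sq (h𝓛l l) (hne l) hl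
      exact ⟨L, hL, fun _ => hLr⟩
    · obtain ⟨L, hL⟩ := hne l
      exact ⟨L, hL, fun h => absurd h hl⟩
  choose T hT hTr using hchoice
  have hTnorm : ∀ l, ‖T l‖ ≤ 1 := fun l => (h𝓛l l _ (hT l)).isStarProjection.norm_le
  obtain ⟨A, g, hgf, hg, hTA⟩ :=
    exists_tendsto_wot_of_norm_le_one (frequently_iff_neBot.1 hr) hTnorm
  have hA : A ∈ wotLimsup 𝓛l := ⟨T, g, hg, hgf.trans inf_le_left, .of_forall hT,
    ⟨1, .of_forall hTnorm⟩, hTA⟩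
  have hAr : distSqFunctional ξ A ≤ r ^ 2 :=
    le_of_tendsto
      ((@Continuous.tendsto _ _ (WOT H) _ _ (continuous_distSqFunctional ξ) A).comp hTA)
      (mem_of_superset (le_principal_iff.1 (hgf.trans inf_le_right)) fun l hl => (hTr l hl).le)
  exact (pow_le_pow_iff_left₀ Metric.infDist_nonneg hr₀ two_ne_zero).1
    ((infDist_sq_le_of_mem_closure_convexHull h𝓛 (hlim hA) ξ).trans hAr)

/-- If every WOT limit of a norm-bounded subnet chosen from the
net of subspace lattices `𝓛l` lies in the WOT-closed convex hull of the subspace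
lattice `𝓛`, then `d(ξ, E_𝓛) ≤ liminf_λ d(ξ, E_{𝓛_λ})` for every `ξ ∈ H ⊕ H`. -/
theorem norms_of_vector_functionals_stmt0
    {Λ : Type*} [Nonempty Λ] [Preorder Λ] [IsDirected Λ (· ≤ ·)]
    (𝓛l : Λ → Set (H →L[ℂ] H)) (𝓛 : Set (H →L[ℂ] H))
    (h𝓛l : ∀ l, IsSubspaceLattice (𝓛l l)) (h𝓛 : IsSubspaceLattice 𝓛)
    (hlim : wotLimsup 𝓛l ⊆ @closure _ (WOT H) (convexHull ℝ 𝓛)) :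
    ∀ ξ : WithLp 2 (H × H),
      Metric.infDist ξ (Esec 𝓛) ≤
        Filter.liminf (fun l => Metric.infDist ξ (Esec (𝓛l l))) Filter.atTop := by
  intro ξ
  have hbdd : ∀ l, Metric.infDist ξ (Esec (𝓛l l)) ≤ ‖ξ‖ := fun l =>
    (Metric.infDist_le_dist_of_mem (zero_mem_Esec (h𝓛l l).nonempty)).trans_eq (dist_zero_right ξ)
  exact le_of_forall_gt_imp_ge_of_dense fun r hr => infDist_le_of_frequently_infDist_lt
    (fun l => (h𝓛l l).proj) (fun l => (h𝓛l l).nonempty) h𝓛.proj hlim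
    (frequently_lt_of_liminf_lt (isCoboundedUnder_ge_of_le atTop hbdd) hr)
end
end

section
/- Let H be a complex Hilbert space, (𝓐_λ)_{λ∈Λ} a net of weak-operator-topology closed unital subalgebras of B(H), and 𝓐 a subalgebra of B(H) such that every weak-operator-topology limit of a norm-bounded subnet (T_μ)_{μ∈Λ₀} with T_μ ∈ 𝓐_μ belongs to 𝓐. Then for all x, y ∈ H, limsup_{λ∈Λ} ‖ω_{x,y}|_{𝓐_λ}‖ ≤ ‖ω_{x,y}|_𝓐‖. -/
/-!
Pick `a` strictly between `‖ω_{x,y}|_𝓐‖` and the limsup. Frequently there is a contraction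
`T_λ ∈ 𝓐_λ` with `|⟨T_λ x, y⟩| > a`; along an ultrafilter refining these indices the `T_λ` have a
WOT limit `A` with `‖A‖ ≤ 1`, so `A ∈ 𝓐` and `|⟨A x, y⟩| ≥ a`, a contradiction.

The limit exists because WOT closed balls are compact: the matrix coefficients `T ↦ ⟨T p.1, p.2⟩`
embed the ball of radius `r` onto the set of sesquilinear forms bounded by `r`, which is closed
in a product of compact discs, and by Riesz representation every such form comes from an operator.
-/

open Filter

noncomputable section

variable {H : Type*} [NormedAddCommGroup H] [InnerProductSpace ℂ H] [CompleteSpace H]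

/-- `‖ω_{x,y}|_𝓐‖ = sup {|⟨Tx, y⟩| : T ∈ 𝓐, ‖T‖ ≤ 1}`. -/
def omegaNorm (𝓐 : Set (H →L[ℂ] H)) (x y : H) : ℝ :=
  sSup {r : ℝ | ∃ T ∈ 𝓐, ‖T‖ ≤ 1 ∧ r = ‖(inner ℂ (T x) y : ℂ)‖}

section WOTCompactness

open Topology Metric

variable {E : Type*} [NormedAddCommGroup E] [InnerProductSpace ℂ E]

def innerCoeffs (T : E →L[ℂ] E) : E × E → ℂ := fun p => inner ℂ (T p.1) p.2

lemma isInducing_innerCoeffs : @IsInducing _ _ (WOT E) _ (innerCoeffs (E := E)) :=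
  @IsInducing.mk _ _ (WOT E) _ _ rfl

lemma continuous_innerCoeffs_apply (p : E × E) :
    @Continuous _ _ (WOT E) _ fun T : E →L[ℂ] E => innerCoeffs T p :=
  letI := WOT E
  (continuous_apply p).comp isInducing_innerCoeffs.continuous

def boundedSesqForms (r : ℝ) : Set (E × E → ℂ) :=
  {φ | (∀ x x' y, φ (x + x', y) = φ (x, y) + φ (x', y)) ∧
    (∀ (c : ℂ) x y, φ (c • x, y) = starRingEnd ℂ c * φ (x, y)) ∧
    (∀ x y y', φ (x, y + y') = φ (x, y) + φ (x, y')) ∧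
    (∀ (c : ℂ) x y, φ (x, c • y) = c * φ (x, y)) ∧
    ∀ x y, ‖φ (x, y)‖ ≤ r * ‖x‖ * ‖y‖}

lemma isClosed_boundedSesqForms (r : ℝ) : IsClosed (boundedSesqForms (E := E) r) := by
  simp only [boundedSesqForms, Set.ofPred_and, Set.ofPred_forall]
  refine .inter (isClosed_iInter fun x => isClosed_iInter fun x' => isClosed_iInter fun y =>
    isClosed_eq (by fun_prop) (by fun_prop)) (.inter ?_ (.inter ?_ (.inter ?_ ?_)))
  · exact isClosed_iInter fun c => isClosed_iInter fun x => isClosed_iInter fun y =>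
      isClosed_eq (by fun_prop) (by fun_prop)
  · exact isClosed_iInter fun x => isClosed_iInter fun y => isClosed_iInter fun y' =>
      isClosed_eq (by fun_prop) (by fun_prop)
  · exact isClosed_iInter fun c => isClosed_iInter fun x => isClosed_iInter fun y =>
      isClosed_eq (by fun_prop) (by fun_prop)
  · exact isClosed_iInter fun x => isClosed_iInter fun y =>
      isClosed_le (by fun_prop) (by fun_prop)

lemma boundedSesqForms_subset_pi (r : ℝ) :
    boundedSesqForms (E := E) r ⊆ Set.univ.pi fun p => closedBall 0 (r * ‖p.1‖ * ‖p.2‖) :=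
  fun _ hφ p _ => mem_closedBall_zero_iff.2 (hφ.2.2.2.2 p.1 p.2)

lemma innerCoeffs_mem_boundedSesqForms {r : ℝ} {T : E →L[ℂ] E} (hT : ‖T‖ ≤ r) :
    innerCoeffs T ∈ boundedSesqForms r := by
  refine ⟨fun x x' y => ?_, fun c x y => ?_, fun x y y' => ?_, fun c x y => ?_, fun x y => ?_⟩
  · simp only [innerCoeffs, map_add, inner_add_left]
  · simp only [innerCoeffs, map_smul, inner_smul_left]
  · simp only [innerCoeffs, inner_add_right]
  · simp only [innerCoeffs, inner_smul_right]
  · calc ‖inner ℂ (T x) y‖ ≤ ‖T x‖ * ‖y‖ := norm_inner_le_norm _ _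
      _ ≤ r * ‖x‖ * ‖y‖ := by gcongr; exact T.le_of_opNorm_le hT x

lemma exists_innerCoeffs_eq_of_mem_boundedSesqForms [CompleteSpace E] {r : ℝ} (hr : 0 ≤ r)
    {φ : E × E → ℂ} (hφ : φ ∈ boundedSesqForms r) :
    ∃ A ∈ closedBall (0 : E →L[ℂ] E) r, innerCoeffs A = φ := by
  obtain ⟨hadd₁, hsmul₁, hadd₂, hsmul₂, hbound⟩ := hφ
  let B : E →L⋆[ℂ] E →L[ℂ] ℂ := LinearMap.mkContinuous₂
    (LinearMap.mk₂'ₛₗ (starRingEnd ℂ) (RingHom.id ℂ) (fun x y => φ (x, y))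
      hadd₁ hsmul₁ hadd₂ hsmul₂) r hbound
  refine ⟨InnerProductSpace.continuousLinearMapOfBilin B, mem_closedBall_zero_iff.2 ?_, ?_⟩
  · refine ContinuousLinearMap.opNorm_le_bound _ hr fun v => ?_
    calc _ = ‖B v‖ := by simp [InnerProductSpace.continuousLinearMapOfBilin]
      _ ≤ r * ‖v‖ := B.le_of_opNorm_le (LinearMap.mkContinuous₂_norm_le _ hr _) v
  · funext p
    exact InnerProductSpace.continuousLinearMapOfBilin_apply B p.1 p.2

lemma image_innerCoeffs_closedBall [CompleteSpace E] {r : ℝ} (hr : 0 ≤ r) :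
    innerCoeffs '' closedBall (0 : E →L[ℂ] E) r = boundedSesqForms r := by
  refine subset_antisymm ?_ fun φ hφ => exists_innerCoeffs_eq_of_mem_boundedSesqForms hr hφ
  rintro _ ⟨T, hT, rfl⟩
  exact innerCoeffs_mem_boundedSesqForms (mem_closedBall_zero_iff.1 hT)

theorem isCompact_closedBall_wot [CompleteSpace E] {r : ℝ} (hr : 0 ≤ r) :
    @IsCompact _ (WOT E) (closedBall (0 : E →L[ℂ] E) r) := by
  let _ : TopologicalSpace (E →L[ℂ] E) := WOT E
  rw [isInducing_innerCoeffs.isCompact_iff, image_innerCoeffs_closedBall hr]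
  exact (isCompact_univ_pi fun _ => isCompact_closedBall _ _).of_isClosed_subset
    (isClosed_boundedSesqForms r) (boundedSesqForms_subset_pi r)

end WOTCompactness

section OmegaNorm

variable {E : Type*} [NormedAddCommGroup E] [InnerProductSpace ℂ E]

lemma omegaNorm_nonneg (S : Set (E →L[ℂ] E)) (x y : E) : 0 ≤ omegaNorm S x y :=
  Real.sSup_nonneg <| by rintro _ ⟨T, -, -, rfl⟩; positivity

lemma bddAbove_omegaNorm_set (S : Set (E →L[ℂ] E)) (x y : E) :
    BddAbove {r : ℝ | ∃ T ∈ S, ‖T‖ ≤ 1 ∧ r = ‖inner ℂ (T x) y‖} := by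
  refine ⟨‖x‖ * ‖y‖, ?_⟩
  rintro _ ⟨T, -, hT, rfl⟩
  simpa [innerCoeffs] using (innerCoeffs_mem_boundedSesqForms hT).2.2.2.2 x y

lemma norm_inner_le_omegaNorm {S : Set (E →L[ℂ] E)} {T : E →L[ℂ] E} (hTS : T ∈ S) (hT : ‖T‖ ≤ 1)
    (x y : E) : ‖inner ℂ (T x) y‖ ≤ omegaNorm S x y :=
  le_csSup (bddAbove_omegaNorm_set S x y) ⟨T, hTS, hT, rfl⟩

lemma omegaNorm_mono {S S' : Set (E →L[ℂ] E)} (h : S ⊆ S') (x y : E) :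
    omegaNorm S x y ≤ omegaNorm S' x y :=
  Real.sSup_le (by rintro _ ⟨T, hTS, hT, rfl⟩; exact norm_inner_le_omegaNorm (h hTS) hT x y)
    (omegaNorm_nonneg S' x y)

lemma exists_lt_norm_inner_of_lt_omegaNorm {S : Set (E →L[ℂ] E)} {x y : E} {a : ℝ} (ha : 0 ≤ a)
    (h : a < omegaNorm S x y) : ∃ T ∈ S, ‖T‖ ≤ 1 ∧ a < ‖inner ℂ (T x) y‖ := by
  have hne : {r : ℝ | ∃ T ∈ S, ‖T‖ ≤ 1 ∧ r = ‖inner ℂ (T x) y‖}.Nonempty := by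
    refine Set.nonempty_iff_ne_empty.2 fun hempty => ?_
    rw [omegaNorm, hempty, Real.sSup_empty] at h
    exact not_lt.2 ha h
  obtain ⟨_, ⟨T, hTS, hT, rfl⟩, haT⟩ := exists_lt_of_lt_csSup hne h
  exact ⟨T, hTS, hT, haT⟩

theorem exists_mem_wotLimsup_le_norm_inner [CompleteSpace E] {Λ : Type*} [Preorder Λ]
    {F : Λ → Set (E →L[ℂ] E)} {x y : E} {a : ℝ} (ha : 0 ≤ a)
    (hfreq : ∃ᶠ l in atTop, a < omegaNorm (F l) x y) :
    ∃ A ∈ wotLimsup F, ‖A‖ ≤ 1 ∧ a ≤ ‖inner ℂ (A x) y‖ := by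
  let _ : TopologicalSpace (E →L[ℂ] E) := WOT E
  have := frequently_iff_neBot.1 hfreq
  let U := Ultrafilter.of (atTop ⊓ 𝓟 {l | a < omegaNorm (F l) x y})
  have hU : (U : Filter Λ) ≤ atTop ⊓ 𝓟 {l | a < omegaNorm (F l) x y} := Ultrafilter.of_le _
  have hUa : ∀ᶠ l in (U : Filter Λ), a < omegaNorm (F l) x y :=
    hU.trans inf_le_right (mem_principal_self _)
  obtain ⟨T, hT⟩ : ∃ T : Λ → E →L[ℂ] E,
      ∀ᶠ l in (U : Filter Λ), T l ∈ F l ∧ ‖T l‖ ≤ 1 ∧ a < ‖inner ℂ (T l x) y‖ :=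
    (hUa.mono fun l hl => exists_lt_norm_inner_of_lt_omegaNorm ha hl).choice
  obtain ⟨A, hA, hTA⟩ := (isCompact_closedBall_wot zero_le_one).ultrafilter_le_nhds (U.map T)
    (le_principal_iff.2 <| hT.mono fun l hl => mem_closedBall_zero_iff.2 hl.2.1)
  refine ⟨A, ⟨T, U, U.neBot, hU.trans inf_le_left, hT.mono fun l hl => hl.1,
    ⟨1, hT.mono fun l hl => hl.2.1⟩, hTA⟩, mem_closedBall_zero_iff.1 hA, ?_⟩
  exact ge_of_tendsto (((continuous_innerCoeffs_apply (x, y)).tendsto A).comp hTA).norm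
    (hT.mono fun l hl => hl.2.2.le)

theorem limsup_omegaNorm_le_omegaNorm_wotLimsup [CompleteSpace E] {Λ : Type*} [Nonempty Λ]
    [Preorder Λ] [IsDirected Λ (· ≤ ·)] (F : Λ → Set (E →L[ℂ] E)) (x y : E) :
    limsup (fun l => omegaNorm (F l) x y) atTop ≤ omegaNorm (wotLimsup F) x y := by
  by_contra! h
  obtain ⟨a, hMa, ha⟩ := exists_between h
  have hfreq : ∃ᶠ l in atTop, a < omegaNorm (F l) x y :=
    frequently_lt_of_lt_limsup (isCoboundedUnder_le_of_le _ fun l => omegaNorm_nonneg _ x y) ha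
  obtain ⟨A, hAF, hA, haA⟩ :=
    exists_mem_wotLimsup_le_norm_inner ((omegaNorm_nonneg _ x y).trans hMa.le) hfreq
  exact not_lt.2 (haA.trans (norm_inner_le_omegaNorm hAF hA x y)) hMa

end OmegaNorm

theorem norms_of_vector_functionals_stmt1_general
    {Λ : Type*} [Nonempty Λ] [Preorder Λ] [IsDirected Λ (· ≤ ·)]
    (𝓐l : Λ → Subalgebra ℂ (H →L[ℂ] H)) (𝓐 : Subalgebra ℂ (H →L[ℂ] H))
    (hlim : wotLimsup (fun l => (𝓐l l : Set (H →L[ℂ] H))) ⊆ (𝓐 : Set (H →L[ℂ] H)))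
    (x y : H) :
    Filter.limsup (fun l => omegaNorm (𝓐l l : Set (H →L[ℂ] H)) x y) Filter.atTop ≤
      omegaNorm (𝓐 : Set (H →L[ℂ] H)) x y :=
  (limsup_omegaNorm_le_omegaNorm_wotLimsup _ x y).trans (omegaNorm_mono hlim x y)

/-- If every WOT limit of a norm-bounded subnet chosen from the
net of WOT-closed unital subalgebras `𝓐l` of `B(H)` lies in the subalgebra `𝓐`,
then `limsup_λ ‖ω_{x,y}|_{𝓐_λ}‖ ≤ ‖ω_{x,y}|_𝓐‖` for all `x y : H`. -/
theorem norms_of_vector_functionals_stmt1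
    {Λ : Type*} [Nonempty Λ] [Preorder Λ] [IsDirected Λ (· ≤ ·)]
    (𝓐l : Λ → Subalgebra ℂ (H →L[ℂ] H)) (𝓐 : Subalgebra ℂ (H →L[ℂ] H))
    (hclosed : ∀ l, @IsClosed _ (WOT H) (𝓐l l : Set (H →L[ℂ] H)))
    (hlim : wotLimsup (fun l => (𝓐l l : Set (H →L[ℂ] H))) ⊆ (𝓐 : Set (H →L[ℂ] H)))
    (x y : H) :
    Filter.limsup (fun l => omegaNorm (𝓐l l : Set (H →L[ℂ] H)) x y) Filter.atTop ≤
      omegaNorm (𝓐 : Set (H →L[ℂ] H)) x y :=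
  norms_of_vector_functionals_stmt1_general 𝓐l 𝓐 hlim x y
end
end

section
/- Let (𝓐_λ)_{λ∈Λ} be a net of von Neumann algebras on a complex Hilbert space H and 𝓐 a von Neumann algebra on H equal to the strong*-liminf of (𝓐_λ). If (L_μ)_{μ∈Λ₀} is a subnet with each L_μ an orthogonal projection belonging to the commutant 𝓐_μ′, and L_μ converges in the weak operator topology to an operator A, then A belongs to the commutant 𝓐′ and satisfies 0 ≤ A ≤ I. -/
/-! Let `S_l ∈ 𝓐_l` approximate `S ∈ 𝓐` strongly-*. Because the projections `T_l` have norm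
at most `1`, their weak convergence to `A` survives pairing against the norm-convergent vectors
`S_l x → S x` and `S_l* y → S* y`; as `T_l S_l = S_l T_l`, the two limits give
`⟪A S x, y⟫ = ⟪A x, S* y⟫ = ⟪S A x, y⟫`. Positivity of `A` and `1 - A` is inherited from the
projections `T_l` and `1 - T_l`, since `{z : ℂ | 0 ≤ z}` is closed. -/

open Filter

noncomputable section

variable {H : Type*} [NormedAddCommGroup H] [InnerProductSpace ℂ H] [CompleteSpace H]

/-- strong-* liminf of a net of sets of operators. -/
def sstarLiminf {Λ : Type*} [Preorder Λ] (F : Λ → Set (H →L[ℂ] H)) :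
    Set (H →L[ℂ] H) :=
  {A | ∃ T : Λ → H →L[ℂ] H, (∀ l, T l ∈ F l) ∧
      (∀ x : H, Tendsto (fun l => T l x) atTop (nhds (A x))) ∧
      (∀ x : H, Tendsto (fun l => ContinuousLinearMap.adjoint (T l) x) atTop
        (nhds (ContinuousLinearMap.adjoint A x)))}

open scoped InnerProductSpace ComplexOrder

section

variable {E : Type*} [NormedAddCommGroup E] [InnerProductSpace ℂ E]
  {ι : Type*} {f : Filter ι}

theorem tendsto_nhds_WOT_iff {T : ι → E →L[ℂ] E} {A : E →L[ℂ] E} :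
    Tendsto T f (@nhds _ (WOT E) A) ↔
      ∀ x y, Tendsto (fun l => ⟪T l x, y⟫_ℂ) f (nhds ⟪A x, y⟫_ℂ) := by
  rw [WOT, nhds_induced, tendsto_comap_iff, tendsto_pi_nhds, Prod.forall]
  rfl

theorem ContinuousLinearMap.isPositive_iff_forall_inner_nonneg (T : E →L[ℂ] E) :
    T.IsPositive ↔ ∀ x, 0 ≤ ⟪T x, x⟫_ℂ := by
  rw [isPositive_iff_complex]
  refine forall_congr' fun x => ?_
  rw [and_comm, RCLike.nonneg_iff (z := ⟪T x, x⟫_ℂ), ← RCLike.conj_eq_iff_im,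
    RCLike.conj_eq_iff_re]
  rfl

theorem ContinuousLinearMap.IsPositive.of_tendsto_inner [f.NeBot] {T : ι → E →L[ℂ] E}
    {A : E →L[ℂ] E} (hT : ∀ x, Tendsto (fun l => ⟪T l x, x⟫_ℂ) f (nhds ⟪A x, x⟫_ℂ))
    (hpos : ∀ᶠ l in f, (T l).IsPositive) : A.IsPositive :=
  (A.isPositive_iff_forall_inner_nonneg).2 fun x =>
    ge_of_tendsto (hT x) (hpos.mono fun l hl => (T l).isPositive_iff_forall_inner_nonneg.1 hl x)

theorem norm_inner_apply_le_of_opNorm_le {T : E →L[ℂ] E} {C : ℝ} (hT : ‖T‖ ≤ C) (x y : E) :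
    ‖⟪T x, y⟫_ℂ‖ ≤ C * ‖x‖ * ‖y‖ :=
  calc ‖⟪T x, y⟫_ℂ‖ ≤ ‖T x‖ * ‖y‖ := norm_inner_le_norm _ _
    _ ≤ C * ‖x‖ * ‖y‖ := by gcongr; exact T.le_of_opNorm_le hT x

theorem tendsto_inner_apply_of_tendsto {T : ι → E →L[ℂ] E} {A : E →L[ℂ] E} {C : ℝ}
    (hT : ∀ x y, Tendsto (fun l => ⟪T l x, y⟫_ℂ) f (nhds ⟪A x, y⟫_ℂ))
    (hC : ∀ᶠ l in f, ‖T l‖ ≤ C) {u v : ι → E} {x y : E}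
    (hu : Tendsto u f (nhds x)) (hv : Tendsto v f (nhds y)) :
    Tendsto (fun l => ⟪T l (u l), v l⟫_ℂ) f (nhds ⟪A x, y⟫_ℂ) := by
  have hsplit : ∀ l, ⟪T l (u l), v l⟫_ℂ =
      ⟪T l x, y⟫_ℂ + (⟪T l (u l - x), v l⟫_ℂ + ⟪T l x, v l - y⟫_ℂ) := fun l => by
    simp only [map_sub, inner_sub_left, inner_sub_right]; ring
  have hu₀ := tendsto_iff_norm_sub_tendsto_zero.1 hu
  have hv₀ := tendsto_iff_norm_sub_tendsto_zero.1 hv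
  have hbound : Tendsto (fun l => C * ‖u l - x‖ * ‖v l‖ + C * ‖x‖ * ‖v l - y‖) f (nhds 0) := by
    simpa using ((hu₀.const_mul C).mul hv.norm).add (hv₀.const_mul (C * ‖x‖))
  have herror : Tendsto (fun l => ⟪T l (u l - x), v l⟫_ℂ + ⟪T l x, v l - y⟫_ℂ) f (nhds 0) := by
    refine squeeze_zero_norm' (hC.mono fun l hl => ?_) hbound
    exact (norm_add_le _ _).trans (add_le_add (norm_inner_apply_le_of_opNorm_le hl _ _)
      (norm_inner_apply_le_of_opNorm_le hl _ _))
  simpa only [hsplit, add_zero] using (hT x y).add herror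

theorem commute_of_tendsto [CompleteSpace E] [f.NeBot] {T S : ι → E →L[ℂ] E}
    {A B : E →L[ℂ] E} {C : ℝ}
    (hT : ∀ x y, Tendsto (fun l => ⟪T l x, y⟫_ℂ) f (nhds ⟪A x, y⟫_ℂ))
    (hC : ∀ᶠ l in f, ‖T l‖ ≤ C)
    (hS : ∀ x, Tendsto (fun l => S l x) f (nhds (B x)))
    (hS_adjoint : ∀ x, Tendsto (fun l => ContinuousLinearMap.adjoint (S l) x) f
      (nhds (ContinuousLinearMap.adjoint B x)))
    (hcomm : ∀ᶠ l in f, Commute (S l) (T l)) : Commute B A := by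
  ext x
  refine ext_inner_right ℂ fun y => ?_
  have hAB := tendsto_inner_apply_of_tendsto hT hC (hS x) (tendsto_const_nhds (x := y))
  have hBA := tendsto_inner_apply_of_tendsto hT hC (tendsto_const_nhds (x := x)) (hS_adjoint y)
  have heq : ∀ᶠ l in f, ⟪T l (S l x), y⟫_ℂ = ⟪T l x, ContinuousLinearMap.adjoint (S l) y⟫_ℂ :=
    hcomm.mono fun l hl => by
      rw [ContinuousLinearMap.adjoint_inner_right]
      exact congrArg (fun U => ⟪U x, y⟫_ℂ) hl.eq.symm
  have := tendsto_nhds_unique (hAB.congr' heq) hBA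
  rw [ContinuousLinearMap.adjoint_inner_right] at this
  exact this.symm

end

theorem IsOrthoProj.isStarProjection_s7 {L : H →L[ℂ] H} (hL : IsOrthoProj L) :
    IsStarProjection L :=
  ⟨hL.2, hL.1⟩

theorem norms_of_vector_functionals_stmt7_general
    {Λ : Type*} [Preorder Λ]
    (𝓐l : Λ → VonNeumannAlgebra H) (𝓐 : VonNeumannAlgebra H)
    (hliminf : (𝓐 : Set (H →L[ℂ] H)) = sstarLiminf (fun l => (𝓐l l : Set (H →L[ℂ] H))))
    (T : Λ → H →L[ℂ] H) (f : Filter Λ) (hf : f.NeBot) (hle : f ≤ atTop)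
    (hmem : ∀ᶠ l in f, IsOrthoProj (T l) ∧ T l ∈ Set.centralizer (𝓐l l : Set (H →L[ℂ] H)))
    (A : H →L[ℂ] H) (hconv : Tendsto T f (@nhds _ (WOT H) A)) :
    A ∈ Set.centralizer (𝓐 : Set (H →L[ℂ] H)) ∧
      A.IsPositive ∧ (1 - A).IsPositive := by
  have hT := tendsto_nhds_WOT_iff.1 hconv
  have hT_one_sub : ∀ x, Tendsto (fun l => ⟪(1 - T l) x, x⟫_ℂ) f (nhds ⟪(1 - A) x, x⟫_ℂ) :=
    fun x => by
      simpa only [sub_apply, one_apply_eq_self, inner_sub_left]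
        using tendsto_const_nhds.sub (hT x x)
  have hproj : ∀ᶠ l in f, IsStarProjection (T l) := hmem.mono fun l hl => hl.1.isStarProjection_s7
  refine ⟨fun S hS => ?_,
    .of_tendsto_inner (fun x => hT x x) (hproj.mono fun l hl => .of_isStarProjection hl),
    .of_tendsto_inner hT_one_sub (hproj.mono fun l hl => .of_isStarProjection hl.one_sub)⟩
  obtain ⟨S', hS'_mem, hS', hS'_adjoint⟩ := (hliminf ▸ hS :)
  exact (commute_of_tendsto hT (hproj.mono fun l hl => hl.norm_le)
    (fun x => (hS' x).mono_left hle) (fun x => (hS'_adjoint x).mono_left hle)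
    (hmem.mono fun l hl => hl.2 (S' l) (hS'_mem l))).eq

/-- Let `𝓐` be a von Neumann algebra equal to the strong-* liminf of a
net of von Neumann algebras `𝓐l`.  If a subnet of orthogonal projections `L_μ ∈ 𝓐_μ′`
(subnets encoded by a nontrivial filter `f ≤ atTop`) converges to `A` in the weak
operator topology, then `A` lies in the commutant `𝓐′` and `0 ≤ A ≤ I`. -/
theorem norms_of_vector_functionals_stmt7
    {Λ : Type*} [Nonempty Λ] [Preorder Λ] [IsDirected Λ (· ≤ ·)]
    (𝓐l : Λ → VonNeumannAlgebra H) (𝓐 : VonNeumannAlgebra H)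
    (hliminf : (𝓐 : Set (H →L[ℂ] H)) = sstarLiminf (fun l => (𝓐l l : Set (H →L[ℂ] H))))
    (T : Λ → H →L[ℂ] H) (f : Filter Λ) (hf : f.NeBot) (hle : f ≤ atTop)
    (hmem : ∀ᶠ l in f, IsOrthoProj (T l) ∧ T l ∈ Set.centralizer (𝓐l l : Set (H →L[ℂ] H)))
    (A : H →L[ℂ] H) (hconv : Tendsto T f (@nhds _ (WOT H) A)) :
    A ∈ Set.centralizer (𝓐 : Set (H →L[ℂ] H)) ∧
      A.IsPositive ∧ (1 - A).IsPositive :=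
  norms_of_vector_functionals_stmt7_general 𝓐l 𝓐 hliminf T f hf hle hmem A hconv
end
end
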